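/- Let G be a graph, C a longest cycle of G with a fixed orientation, and x a vertex not on C. If y, z ∈ N_G(x) ∩ V(C) with y ≠ z, then there is no path in G from y⁺ to z⁺ whose internal vertices all lie outside C; in particular y⁺z⁺ ∉ E(G). -/

import Mathlib

/-!
Rotate `C` so that it reads `y y⁺ … z z⁺ … y`. If a path `P` from `y⁺` to `z⁺` that avoids `C`
internally missed `x`, then `x z … y⁺ P z⁺ … y x` (the first segment run backwards along `C`)
would be a cycle longer than `C` by `|P|`. So `P` passes through `x`, and then its segment from
`y⁺` to `x`, the edge `xy` and the path `C - yy⁺` form a cycle longer than `C`.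
-/

open SimpleGraph

namespace SimpleGraph.Walk

variable {V : Type*} {G : SimpleGraph V}

theorem mem_support_iff_eq_or_eq_or_mem_interior {u v w : V} (p : G.Walk u v) :
    w ∈ p.support ↔ w = u ∨ w = v ∨ w ∈ p.support.tail.dropLast := by
  cases p with
  | nil => simp
  | cons h q =>
    rw [support_cons, List.tail_cons, List.mem_cons, ← q.dropLast_support_concat,
      List.dropLast_concat, List.mem_append, List.mem_singleton]
    tauto

theorem apply_fst_eq_snd_of_mem_darts {u v : V} {p : G.Walk u v} {f : V → V}
    (hf : ∀ i < p.length, f (p.getVert i) = p.getVert (i + 1)) {d : G.Dart} (hd : d ∈ p.darts) :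
    f d.fst = d.snd := by
  obtain ⟨i, hi, rfl⟩ := List.mem_iff_getElem.mp hd
  rw [darts_getElem_eq_getVert]
  exact hf i (by simpa using hi)

theorem IsPath.append {u v w : V} {p : G.Walk u v} {q : G.Walk v w} (hp : p.IsPath)
    (hq : q.IsPath) (h : p.support.Disjoint q.support.tail) : (p.append q).IsPath := by
  rw [isPath_def, support_append, List.nodup_append']
  exact ⟨hp.support_nodup, hq.support_nodup.tail, h⟩

theorem IsPath.length_add_one_le {L : ℕ} (hL : ∀ w (c : G.Walk w w), c.IsCycle → c.length ≤ L)
    {u v : V} {p : G.Walk u v} (hp : p.IsPath) (h : G.Adj v u) (hlen : 2 ≤ p.length) :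
    p.length + 1 ≤ L := by
  have hcyc : (p.append (cons h Walk.nil)).IsCycle := by
    refine hp.isCycle_append (by simpa using h.ne) ?_ (by omega)
    have := hp.support_nodup
    rw [← cons_tail_support] at this
    simpa using (List.nodup_cons.mp this).1
  simpa using hL u _ hcyc

variable {x y z a b : V}

theorem not_disjoint_of_isPath_to_neighbor {hya : G.Adj y a} {E : G.Walk a y}
    (hC : (cons hya E).IsCycle)
    (hlongest : ∀ w (c : G.Walk w w), c.IsCycle → c.length ≤ (cons hya E).length)
    (hxy : G.Adj x y) (hx : x ∉ E.support) {Q : G.Walk a x} (hQ : Q.IsPath) :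
    ¬ E.support.Disjoint Q.support.tail := by
  intro hdisj
  have hE : E.IsPath := ((cons_isCycle_iff E hya).mp hC).1
  have h3 := hC.three_le_length
  have hlen := (hE.reverse.append hQ (by simpa using hdisj)).length_add_one_le hlongest hxy
    (by simp at h3 ⊢; omega)
  simp only [length_append, length_reverse, length_cons] at hlen
  exact hx (eq_of_length_eq_zero (by omega : Q.length = 0) ▸ E.start_mem_support)

-- The cycle is `y a ⋯ z b ⋯ y`, with `a = y⁺`, `b = z⁺` and arcs `M`, `N`.
theorem mem_support_of_isPath_between_successors {hya : G.Adj y a} {M : G.Walk a z}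
    {hzb : G.Adj z b} {N : G.Walk b y} (hC : (cons hya (M.append (cons hzb N))).IsCycle)
    (hlongest : ∀ w (c : G.Walk w w), c.IsCycle →
      c.length ≤ (cons hya (M.append (cons hzb N))).length)
    (hxy : G.Adj x y) (hxz : G.Adj x z) (hxM : x ∉ M.support) (hxN : x ∉ N.support)
    {P : G.Walk a b} (hP : P.IsPath)
    (hPC : ∀ w ∈ P.support, w ∈ M.support ∨ w ∈ N.support → w = a ∨ w = b) :
    x ∈ P.support := by
  by_contra hxP
  obtain ⟨hM, hN, hMN⟩ :
      M.support.Nodup ∧ N.support.Nodup ∧ M.support.Disjoint N.support := by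
    simpa [support_append, List.nodup_append'] using hC.support_nodup
  have hbN : b ∉ N.support.tail := (List.nodup_cons.mp (N.cons_tail_support ▸ hN)).1
  have haP : a ∉ P.support.tail :=
    (List.nodup_cons.mp (P.cons_tail_support ▸ hP.support_nodup)).1
  have hPN : (P.append N).IsPath := hP.append (.mk' hN) fun w hwP hwN ↦ by
    rcases hPC w hwP (.inr (List.mem_of_mem_tail hwN)) with rfl | rfl
    · exact hMN M.start_mem_support (List.mem_of_mem_tail hwN)
    · exact hbN hwN
  have hMPN : (M.reverse.append (P.append N)).IsPath := (IsPath.mk' hM).reverse.append hPN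
    fun w hwM hw ↦ by
      rw [support_reverse, List.mem_reverse] at hwM
      rw [tail_support_append, List.mem_append] at hw
      rcases hw with hwP | hwN
      · rcases hPC w (List.mem_of_mem_tail hwP) (.inl hwM) with rfl | rfl
        · exact haP hwP
        · exact hMN hwM N.start_mem_support
      · exact hMN hwM (List.mem_of_mem_tail hwN)
  have hpath : (cons hxz (M.reverse.append (P.append N))).IsPath := by
    rw [cons_isPath_iff]
    refine ⟨hMPN, ?_⟩
    simp [hxM, hxN, hxP]
  have h3 := hC.three_le_length
  simp only [length_cons, length_append] at h3
  have hlen := hpath.length_add_one_le hlongest hxy.symm (by simp; omega)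
  simp only [length_cons, length_append, length_reverse] at hlen
  have hab : a = b := eq_of_length_eq_zero (by omega : P.length = 0)
  exact hMN M.start_mem_support (hab ▸ N.start_mem_support)

theorem not_isPath_between_successors {D : G.Walk y y} (hD : D.IsCycle)
    (hlongest : ∀ w (c : G.Walk w w), c.IsCycle → c.length ≤ D.length) {succ : V → V}
    (hsucc : ∀ d ∈ D.darts, succ d.fst = d.snd) (hx : x ∉ D.support) (hxy : G.Adj x y)
    (hxz : G.Adj x z) (hzD : z ∈ D.support) (hyz : y ≠ z) {P : G.Walk (succ y) (succ z)}
    (hPD : ∀ w ∈ P.support, w ∈ D.support → w = succ y ∨ w = succ z) : ¬ P.IsPath := by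
  intro hP
  cases D with
  | nil => exact hD.not_nil nil_nil
  | cons hya E =>
  obtain rfl : succ y = _ := hsucc ⟨(y, _), hya⟩ (by simp)
  have hzE : z ∈ E.support := by simpa [hyz.symm] using hzD
  obtain ⟨M, R, rfl⟩ := E.mem_support_iff_exists_append.mp hzE
  cases R with
  | nil => exact hyz rfl
  | cons hzb N =>
  obtain rfl : succ z = _ := hsucc ⟨(z, _), hzb⟩ (by simp)
  have hxP := mem_support_of_isPath_between_successors hD hlongest hxy hxz
    (fun h ↦ hx (by simp [support_append, h])) (fun h ↦ hx (by simp [support_append, h])) hP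
    fun w hw hwC ↦ hPD w hw (by simp [support_append, hwC])
  obtain ⟨P₁, P₂, hP₁, -, rfl⟩ := hP.mem_support_iff_exists_append.mp hxP
  refine not_disjoint_of_isPath_to_neighbor hD hlongest hxy (fun h ↦ hx (by simp [h])) hP₁
    fun w hwE hwP₁ ↦ ?_
  rcases hPD w (by simp [support_append, List.mem_of_mem_tail hwP₁]) (by simp [hwE])
    with rfl | rfl
  · exact (List.nodup_cons.mp (P₁.cons_tail_support ▸ hP₁.support_nodup)).1 hwP₁
  · exact hP.ne_of_mem_support_of_append (fun h ↦ hx (by simp [← h]))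
      (List.mem_of_mem_tail hwP₁) P₂.end_mem_support rfl

end SimpleGraph.Walk

theorem stmt_4 {V : Type*} (G : SimpleGraph V)
    {v : V} (C : G.Walk v v) (hC : C.IsCycle)
    (hlongest : ∀ (w : V) (C' : G.Walk w w), C'.IsCycle → C'.length ≤ C.length)
    (succ : V → V)
    (hsucc : ∀ i < C.length, succ (C.getVert i) = C.getVert (i + 1))
    (x : V) (hx : x ∉ C.support)
    (y z : V) (hy : G.Adj x y) (hz : G.Adj x z)
    (hyC : y ∈ C.support) (hzC : z ∈ C.support) (hyz : y ≠ z) :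
    (¬ ∃ P : G.Walk (succ y) (succ z), P.IsPath ∧
        ∀ w ∈ P.support.tail.dropLast, w ∉ C.support) ∧
      ¬ G.Adj (succ y) (succ z) := by
  classical
  have hnoPath (P : G.Walk (succ y) (succ z)) (hPint : ∀ w ∈ P.support.tail.dropLast,
      w ∉ C.support) : ¬ P.IsPath := by
    refine Walk.not_isPath_between_successors (hC.rotate hyC) (by simpa using hlongest)
      (fun d hd ↦ Walk.apply_fst_eq_snd_of_mem_darts hsucc
        ((C.rotate_darts y hyC).perm.mem_iff.mp hd))
      (by simpa using hx) hy hz (by simpa using hzC) hyz fun w hwP hwC ↦ ?_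
    rcases P.mem_support_iff_eq_or_eq_or_mem_interior.mp hwP with h | h | h
    · exact .inl h
    · exact .inr h
    · exact absurd (by simpa using hwC) (hPint w h)
  exact ⟨fun ⟨P, hP, hPint⟩ ↦ hnoPath P hPint hP,
    fun hadj ↦ hnoPath (.cons hadj .nil) (by simp) (by simp [hadj.ne])⟩
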